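/- Polarization product decomposition identity: for lightlike momenta p, q, k and same-helicity polarizations ε⁺_q, ε⁺_k (arbitrary reference vectors), ε⁺_q·ε⁺_k = (p·ε⁺_q)(q·ε⁺_k)/(p·q) + (k·ε⁺_q)(p·ε⁺_k)/(p·k) − (p·ε⁺_q)(p·ε⁺_k)(q·k)/((p·q)(p·k)). -/

import Mathlib

noncomputable section
open Matrix

/-- Angle bracket ⟨ab⟩ on ℂ². -/
def sbr (a b : Fin 2 → ℂ) : ℂ := a 0 * b 1 - a 1 * b 0

/-- Square bracket [ab], the antisymmetric product of the conjugate (tilde) spinors. -/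
def sqb (a b : Fin 2 → ℂ) : ℂ := star (a 0) * star (b 1) - star (a 1) * star (b 0)

/-- The 2×2 matrix p^{αα̇} = λ^α λ̃^{α̇} of a real lightlike momentum. -/
def dyad (v : Fin 2 → ℂ) : Matrix (Fin 2) (Fin 2) ℂ := Matrix.of fun i j => v i * star (v j)

/-- Minkowski inner product A·B of four-vectors in 2×2 matrix form,
via the polar form of the determinant: 2A·B = det(A+B) − det A − det B. -/
def mdot (A B : Matrix (Fin 2) (Fin 2) ℂ) : ℂ := ((A + B).det - A.det - B.det) / 2

/-- Positive-helicity polarization ε⁺_q(r) = √2 r⟩[q/⟨rq⟩ in 2×2 matrix form. -/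
def polP (q r : Fin 2 → ℂ) : Matrix (Fin 2) (Fin 2) ℂ :=
  Matrix.of fun i j => (Real.sqrt 2 : ℂ) * r i * star (q j) / sbr r q

/-- Negative-helicity polarization ε⁻_q(r) = √2 q⟩[r/[qr] in 2×2 matrix form. -/
def polM (q r : Fin 2 → ℂ) : Matrix (Fin 2) (Fin 2) ℂ :=
  Matrix.of fun i j => (Real.sqrt 2 : ℂ) * q i * star (r j) / sqb q r

/-!
Each vector in the identity is a rank-one matrix `c • a⟩[b`, and on such matrices the polar form
of the determinant factorises as `⟨a c⟩ [b d] / 2`. After clearing the denominators `⟨pq⟩[pq]`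
and `⟨pk⟩[pk]`, every term carries the factor `[qk]`, and what is left is a Schouten identity
among angle brackets.
-/

lemma sbr_anticomm (a b : Fin 2 → ℂ) : sbr a b = -sbr b a := by
  simp only [sbr]; ring

lemma sbr_schouten (p q k r s : Fin 2 → ℂ) :
    sbr r s * sbr p q * sbr p k =
      sbr p r * sbr q s * sbr p k - sbr k r * sbr p s * sbr p q - sbr p r * sbr p s * sbr q k := by
  simp only [sbr]; ring

lemma mdot_of_mul_star (x y : ℂ) (a b c d : Fin 2 → ℂ) :
    mdot (of fun i j => x * a i * star (b j)) (of fun i j => y * c i * star (d j)) =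
      x * y * sbr a c * star (sbr b d) / 2 := by
  simp only [mdot, sbr, det_fin_two, Matrix.add_apply, of_apply, star_sub, star_mul']
  ring

lemma polP_eq_of_mul_star (q r : Fin 2 → ℂ) :
    polP q r = of fun i j => (Real.sqrt 2 / sbr r q : ℂ) * r i * star (q j) := by
  ext i j; simp only [polP, of_apply]; ring

lemma dyad_eq_of_mul_star (v : Fin 2 → ℂ) : dyad v = of fun i j => 1 * v i * star (v j) := by
  ext i j; simp only [dyad, of_apply, one_mul]

theorem stmt_13_general (p q k rq rk : Fin 2 → ℂ)
    (hpq : sbr p q ≠ 0) (hpk : sbr p k ≠ 0) :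
    mdot (polP q rq) (polP k rk) =
      mdot (dyad p) (polP q rq) * mdot (dyad q) (polP k rk) / mdot (dyad p) (dyad q)
      + mdot (dyad k) (polP q rq) * mdot (dyad p) (polP k rk) / mdot (dyad p) (dyad k)
      - mdot (dyad p) (polP q rq) * mdot (dyad p) (polP k rk) * mdot (dyad q) (dyad k)
          / (mdot (dyad p) (dyad q) * mdot (dyad p) (dyad k)) := by
  simp only [polP_eq_of_mul_star, dyad_eq_of_mul_star, mdot_of_mul_star]
  -- the normalisations of `ε⁺_q` and `ε⁺_k` are common factors of both sides
  generalize (Real.sqrt 2 / sbr rq q : ℂ) = x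
  generalize (Real.sqrt 2 / sbr rk k : ℂ) = y
  rw [sbr_anticomm k q, star_neg]
  have hpq' : star (sbr p q) ≠ 0 := star_ne_zero.mpr hpq
  have hpk' : star (sbr p k) ≠ 0 := star_ne_zero.mpr hpk
  field_simp
  linear_combination (x * y * star (sbr q k)) * sbr_schouten p q k rq rk

/-- Same-helicity polarization product decomposition:
ε⁺_q·ε⁺_k = (p·ε⁺_q)(q·ε⁺_k)/(p·q) + (k·ε⁺_q)(p·ε⁺_k)/(p·k)
            − (p·ε⁺_q)(p·ε⁺_k)(q·k)/((p·q)(p·k)). -/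
theorem stmt_13 (p q k rq rk : Fin 2 → ℂ)
    (h1 : sbr rq q ≠ 0) (h2 : sbr rk k ≠ 0)
    (hpq : sbr p q ≠ 0) (hpk : sbr p k ≠ 0) :
    mdot (polP q rq) (polP k rk) =
      mdot (dyad p) (polP q rq) * mdot (dyad q) (polP k rk) / mdot (dyad p) (dyad q)
      + mdot (dyad k) (polP q rq) * mdot (dyad p) (polP k rk) / mdot (dyad p) (dyad k)
      - mdot (dyad p) (polP q rq) * mdot (dyad p) (polP k rk) * mdot (dyad q) (dyad k)
          / (mdot (dyad p) (dyad q) * mdot (dyad p) (dyad k)) :=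
  stmt_13_general p q k rq rk hpq hpk
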